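/- arXiv:1703.07698 — 2 statements merged into one kernel-verified Lean document; each statement's English description precedes it below -/
import Mathlib

section
/- Let d ≥ 2, fix 1 ≤ i ≤ j ≤ d−1, let r0 = rd = 1 and r1,…,r_{d−1} be positive integers, and let n, r'_i, r', r, l be positive integers and ε ∈ (0,1) satisfying: r'_i ≤ n/6, r' ≤ r ≤ Σ_{k=1}^{d−1} r_{k−1}·r_k, n > max{200, Σ_{k=1}^{d−1} r_{k−1}·r_k}, and l > max{27·log(n/ε) + 9·log(2r/ε) + 18, 6·r'_i}. Consider r' pairwise disjoint sets of columns of the j-th unfolding of a random sampling pattern, each set consisting of n − r'_i columns, where for each column the set of observed positions is the image of l independent draws, each uniformly distributed over the column's n^j cells {1,…,n}^j, with draws independent across columns. Then with probability at least 1 − ε·r'/r, there exist subsets G_c of the observed positions of each of the r'·(n − r'_i) columns with |G_c| = r'_i + 1, such that for every nonempty subfamily T of these columns, r'·(m_i(T) − r'_i) ≥ |T|, where m_i(T) is the number of distinct values of the i-th coordinate among ⋃_{c∈T} G_c. -/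
/-!
Say that sets `O c` (`c ∈ C`) have surplus `k` if every nonempty subfamily `T` covers at least
`k + #T` points. Such a family can be shrunk to sets of size exactly `k + 1` keeping the surplus:
if some `O c₀` has at least `k + 2` points and deleting any `x ∈ O c₀` broke the surplus, then
each `x` is missed by some tight subfamily through `c₀`; tight subfamilies through `c₀` are closed
under intersection (submodularity), so the smallest one sees `O c₀` disjointly from its other
members and covers too much. Applied blockwise to the observed `i`-th coordinates and lifted back
to observed cells, this produces the sets `G c`: for a nonempty `T`, the block holding the most
columns of `T` already gives `r' (mᵢ(T) - r'ᵢ) ≥ #T`.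

It remains to bound the probability that some block lacks surplus `k = r'ᵢ`. Then some `t`
columns of one block have all `l t` draws with `i`-th coordinate in a set of `k + t - 1` values, so
by a union bound the probability is at most
`r' ∑ₜ C(n - k, t) C(n, k + t - 1) ((k + t - 1) / n) ^ (l t)`.
Each term is at most `ε / (r n)`: if `k + t - 1 ≤ n / 2` the last factor beats the binomials
through `2 ^ (-l t)`; otherwise `3 t ≥ n`, and with `u = n - (k + t - 1)` the binomials are at most
`n ^ (2 u)` while the last factor is at most `exp (-l u / 3)`.
-/

open Finset Real

lemma choose_mul_div_pow_le_exp (n s : ℕ) : (n.choose s : ℝ) * (s / n) ^ s ≤ exp s := by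
  have hns : (n : ℝ) * (s / n) ≤ s := by
    rcases n.eq_zero_or_pos with rfl | hn
    · simp
    · rw [mul_div_cancel₀ _ (by positivity)]
  calc (n.choose s : ℝ) * (s / n) ^ s ≤ n ^ s / s.factorial * (s / n) ^ s := by
        gcongr; exact Nat.choose_le_pow_div s n
    _ = (n * (s / n)) ^ s / s.factorial := by rw [mul_pow]; ring
    _ ≤ (s : ℝ) ^ s / s.factorial := by gcongr
    _ ≤ exp s := pow_div_factorial_le_exp _ (Nat.cast_nonneg _) _

lemma choose_mul_choose_mul_div_pow_le_of_two_mul_le {m n t s L : ℕ} (hmn : m ≤ n)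
    (hsn : 2 * s ≤ n) (hsL : s ≤ L) :
    (m.choose t : ℝ) * n.choose s * (s / n) ^ L ≤ n ^ t * exp s * (1 / 2) ^ (L - s) := by
  have hchoose : (m.choose t : ℝ) ≤ n ^ t := by
    exact_mod_cast (Nat.choose_le_pow m t).trans (Nat.pow_le_pow_left hmn t)
  have hhalf : (s : ℝ) / n ≤ 1 / 2 := by
    rcases n.eq_zero_or_pos with rfl | hn
    · simp
    · rw [div_le_iff₀ (by positivity)]
      have : (2 * s : ℝ) ≤ n := by exact_mod_cast hsn
      linarith
  calc (m.choose t : ℝ) * n.choose s * (s / n) ^ L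
      = m.choose t * (n.choose s * (s / n) ^ s) * (s / n) ^ (L - s) := by
        rw [← pow_mul_pow_sub _ hsL]; ring
    _ ≤ n ^ t * exp s * (1 / 2) ^ (L - s) := by
        gcongr
        exact choose_mul_div_pow_le_exp n s

lemma choose_mul_choose_mul_div_pow_le {m n t s L : ℕ} (hn : 0 < n) (hmn : m ≤ n) (htm : t ≤ m)
    (hsn : s ≤ n) :
    (m.choose t : ℝ) * n.choose s * (s / n) ^ L
      ≤ n ^ (m - t) * n ^ (n - s) * exp (-(L * (n - s : ℕ) / n)) := by
  have h1 : (m.choose t : ℝ) ≤ n ^ (m - t) := by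
    rw [← Nat.choose_symm htm]
    exact_mod_cast (Nat.choose_le_pow m _).trans (Nat.pow_le_pow_left hmn _)
  have h2 : (n.choose s : ℝ) ≤ n ^ (n - s) := by
    rw [← Nat.choose_symm hsn]
    exact_mod_cast Nat.choose_le_pow n _
  have h3 : (s : ℝ) / n ≤ exp (-((n - s : ℕ) / n)) := by
    have := add_one_le_exp (-((n - s : ℕ) / n : ℝ))
    rw [Nat.cast_sub hsn] at this ⊢
    convert this using 1
    field_simp
    ring
  calc (m.choose t : ℝ) * n.choose s * (s / n) ^ L
      ≤ n ^ (m - t) * n ^ (n - s) * exp (-((n - s : ℕ) / n)) ^ L := by gcongr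
    _ = n ^ (m - t) * n ^ (n - s) * exp (-(L * (n - s : ℕ) / n)) := by
        rw [← exp_nat_mul]; ring_nf

lemma choose_sub_mul_choose_mul_div_pow_le_exp_of_two_mul_le {n k l t : ℕ} {a b : ℝ} (hn : 0 < n)
    (ht : 1 ≤ t) (hkl : 6 * k < l) (hsn : 2 * (k + t - 1) ≤ n) (hna : log n ≤ a) (hb : 0 ≤ b)
    (hl : 27 * a + 9 * b + 18 ≤ l) :
    ((n - k).choose t : ℝ) * n.choose (k + t - 1) * ((k + t - 1 : ℕ) / n : ℝ) ^ (l * t)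
      ≤ exp (-(a + b)) := by
  set s := k + t - 1 with hs
  have ha : 0 ≤ a := (log_natCast_nonneg n).trans hna
  have hsR : (s : ℝ) = k + t - 1 := by rw [hs, Nat.cast_sub (by omega)]; push_cast; ring
  have hklR : 6 * (k : ℝ) < l := by exact_mod_cast hkl
  have htR : (1 : ℝ) ≤ t := by exact_mod_cast ht
  have hsL : s ≤ l * t := by
    have : (s : ℝ) ≤ l * t := by nlinarith
    exact_mod_cast this
  have hlog2 : ((l * t - s : ℕ) : ℝ) * 0.6931 ≤ (l * t - s : ℕ) * log 2 := by
    gcongr; linarith [log_two_gt_d9]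
  calc ((n - k).choose t : ℝ) * n.choose s * (s / n : ℝ) ^ (l * t)
      ≤ n ^ t * exp s * (1 / 2) ^ (l * t - s) :=
        choose_mul_choose_mul_div_pow_le_of_two_mul_le (Nat.sub_le n k) hsn hsL
    _ = exp (t * log n + s - (l * t - s : ℕ) * log 2) := by
        rw [← exp_log (by positivity : (0 : ℝ) < n), ← exp_nat_mul, exp_log (by positivity),
          one_div, inv_pow, ← exp_log two_pos, ← exp_nat_mul, exp_log two_pos, ← exp_add,
          ← div_eq_mul_inv, ← exp_sub]
    _ ≤ exp (-(a + b)) := by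
        gcongr
        rw [Nat.cast_sub hsL] at hlog2 ⊢
        push_cast at hlog2 ⊢
        nlinarith [mul_le_mul_of_nonneg_left hna (by positivity : (0 : ℝ) ≤ t)]

lemma choose_sub_mul_choose_mul_div_pow_le_exp_of_lt_two_mul {n k l t : ℕ} {a b : ℝ}
    (htk : t ≤ n - k) (hkn : 6 * k ≤ n) (hsn : n < 2 * (k + t - 1)) (hna : log n ≤ a)
    (hb : 0 ≤ b) (hl : 27 * a + 9 * b + 18 ≤ l) :
    ((n - k).choose t : ℝ) * n.choose (k + t - 1) * ((k + t - 1 : ℕ) / n : ℝ) ^ (l * t)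
      ≤ exp (-(a + b)) := by
  set s := k + t - 1
  have hn : 0 < n := by omega
  have ha : 0 ≤ a := (log_natCast_nonneg n).trans hna
  have hu : n - k - t = n - s - 1 := by omega
  have hpow (e : ℕ) : (n : ℝ) ^ e = exp (e * log n) := by
    rw [exp_nat_mul, exp_log (by positivity)]
  calc ((n - k).choose t : ℝ) * n.choose s * (s / n : ℝ) ^ (l * t)
      ≤ n ^ (n - k - t) * n ^ (n - s) * exp (-((l * t : ℕ) * (n - s : ℕ) / n)) :=
        choose_mul_choose_mul_div_pow_le hn (Nat.sub_le n k) htk (by omega)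
    _ = exp ((n - s - 1 : ℕ) * log n + (n - s : ℕ) * log n - (l * t : ℕ) * (n - s : ℕ) / n) := by
        rw [hu, hpow, hpow, ← exp_add, ← exp_add]; ring_nf
    _ ≤ exp (-(a + b)) := by
        gcongr
        have hu1 : 1 ≤ n - s := by omega
        have huR : (1 : ℝ) ≤ ((n - s : ℕ) : ℝ) := by exact_mod_cast hu1
        rw [Nat.cast_sub hu1, Nat.cast_mul]
        set u : ℝ := ((n - s : ℕ) : ℝ)
        -- `3 t ≥ n` because `2 (k + t - 1) > n ≥ 6 k`
        have h3t : (n : ℝ) ≤ 3 * t := by exact_mod_cast (by omega : n ≤ 3 * t)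
        have hdecay : l * u / 3 ≤ l * t * u / n := by
          rw [div_le_div_iff₀ (by norm_num) (by positivity)]
          have : (0 : ℝ) ≤ l * u := by positivity
          nlinarith
        nlinarith [mul_le_mul_of_nonneg_left hna (by linarith : (0 : ℝ) ≤ 2 * u - 1)]

lemma exp_neg_log_add_log_le {n r : ℕ} {ε : ℝ} (hn : 0 < n) (hr : 0 < r) (hε0 : 0 < ε)
    (hε2 : ε ≤ 2) : exp (-(log (n / ε) + log (2 * r / ε))) ≤ ε / (r * n) := by
  rw [exp_neg, exp_add, exp_log (by positivity), exp_log (by positivity), inv_eq_one_div,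
    div_le_div_iff₀ (by positivity) (by positivity)]
  field_simp
  have : (0 : ℝ) < r * n := by positivity
  nlinarith

lemma choose_sub_mul_choose_mul_div_pow_le_div {n k r l t : ℕ} {ε : ℝ} (hε0 : 0 < ε)
    (hε1 : ε < 1) (hr : 0 < r) (ht : 1 ≤ t) (htk : t ≤ n - k) (hkn : 6 * k ≤ n) (hkl : 6 * k < l)
    (hl : 27 * log (n / ε) + 9 * log (2 * r / ε) + 18 ≤ l) :
    ((n - k).choose t : ℝ) * n.choose (k + t - 1) * ((k + t - 1 : ℕ) / n : ℝ) ^ (l * t)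
      ≤ ε / (r * n) := by
  have hn : 0 < n := by omega
  have hrR : (1 : ℝ) ≤ r := by exact_mod_cast hr
  have hb : 0 ≤ log (2 * r / ε) := log_nonneg (by rw [le_div_iff₀ hε0]; linarith)
  have hna : log n ≤ log (n / ε) :=
    log_le_log (by positivity) (le_div_self (by positivity) hε0 hε1.le)
  refine le_trans ?_ (exp_neg_log_add_log_le hn hr hε0 (by linarith))
  rcases le_or_gt (2 * (k + t - 1)) n with hsn | hsn
  · exact choose_sub_mul_choose_mul_div_pow_le_exp_of_two_mul_le hn ht hkl hsn hna hb hl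
  · exact choose_sub_mul_choose_mul_div_pow_le_exp_of_lt_two_mul htk hkn hsn hna hb hl

lemma sum_choose_sub_mul_choose_mul_div_pow_le_div {n k r l : ℕ} {ε : ℝ} (hε0 : 0 < ε)
    (hε1 : ε < 1) (hr : 0 < r) (hkn : 6 * k ≤ n) (hkl : 6 * k < l)
    (hl : 27 * log (n / ε) + 9 * log (2 * r / ε) + 18 ≤ l) :
    ∑ t ∈ Icc 1 (n - k), ((n - k).choose t : ℝ) * n.choose (k + t - 1)
      * ((k + t - 1 : ℕ) / n : ℝ) ^ (l * t) ≤ ε / r := by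
  calc _ ≤ ∑ _t ∈ Icc 1 (n - k), ε / (r * n) := sum_le_sum fun t ht =>
        choose_sub_mul_choose_mul_div_pow_le_div hε0 hε1 hr (mem_Icc.1 ht).1 (mem_Icc.1 ht).2 hkn
          hkl hl
    _ ≤ n * (ε / (r * n)) := by
        rw [sum_const, Nat.card_Icc, nsmul_eq_mul]
        gcongr
        exact_mod_cast (Nat.add_sub_cancel _ _).trans_le (Nat.sub_le n k)
    _ ≤ ε / r := by
        rcases n.eq_zero_or_pos with rfl | hn
        · rw [Nat.cast_zero, zero_mul]; positivity
        · exact (by field_simp : (n : ℝ) * (ε / (r * n)) = ε / r).le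

lemma card_filter_forall_mem_div_card {ι α : Type*} [Fintype ι] [DecidableEq ι] [Fintype α]
    [Nonempty α] (T : Finset ι) (p : α → Prop) [DecidablePred p] :
    (#{ω : ι → α | ∀ c ∈ T, p (ω c)} : ℝ) / Fintype.card (ι → α)
      = (#{a | p a} / Fintype.card α : ℝ) ^ #T := by
  have hE : ({ω : ι → α | ∀ c ∈ T, p (ω c)} : Finset (ι → α))
      = Fintype.piFinset fun c => if c ∈ T then ({a | p a} : Finset α) else univ := by
    ext ω
    simp only [mem_filter, mem_univ, true_and, Fintype.mem_piFinset]
    refine forall_congr' fun c => ?_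
    split_ifs with hc <;> simp [hc]
  have hα : (Fintype.card α : ℝ) ≠ 0 := by positivity
  rw [hE, Fintype.card_piFinset, Fintype.card_pi, Nat.cast_prod, Nat.cast_prod, ← prod_div_distrib]
  calc ∏ c, ((#(if c ∈ T then ({a | p a} : Finset α) else univ) : ℕ) : ℝ) / Fintype.card α
      = ∏ c, if c ∈ T then (#{a | p a} / Fintype.card α : ℝ) else 1 := by
        refine prod_congr rfl fun c _ => ?_
        split_ifs
        · rfl
        · rw [card_univ, div_self hα]
    _ = (#{a | p a} / Fintype.card α : ℝ) ^ #T := by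
        rw [prod_ite_mem, univ_inter, prod_const]

lemma card_filter_forall_mem_coord_div_card {ι κ : Type*} [Fintype ι] [DecidableEq ι] [Fintype κ]
    [DecidableEq κ] (l n : ℕ) [NeZero n] (i₀ : κ) (T : Finset ι) (R : Finset (Fin n)) :
    (#{ω : ι → Fin l → κ → Fin n | ∀ c ∈ T, ∀ d, ω c d i₀ ∈ R} : ℝ)
        / Fintype.card (ι → Fin l → κ → Fin n) = (#R / n : ℝ) ^ (l * #T) := by
  have hcell : (#{v : κ → Fin n | v i₀ ∈ R} : ℝ) / Fintype.card (κ → Fin n) = #R / n := by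
    have := card_filter_forall_mem_div_card {i₀} (· ∈ R) (α := Fin n)
    simp only [mem_singleton, forall_eq, card_singleton, pow_one, filter_mem_eq_inter, univ_inter,
      Fintype.card_fin] at this
    exact this
  have hcol : (#{f : Fin l → κ → Fin n | ∀ d, f d i₀ ∈ R} : ℝ)
      / Fintype.card (Fin l → κ → Fin n) = (#R / n : ℝ) ^ l := by
    have := card_filter_forall_mem_div_card (univ : Finset (Fin l)) fun v : κ → Fin n => v i₀ ∈ R
    simp only [mem_univ, forall_const, card_univ, Fintype.card_fin] at this
    rw [this, hcell]
  rw [card_filter_forall_mem_div_card T fun f : Fin l → κ → Fin n => ∀ d, f d i₀ ∈ R, hcol,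
    ← pow_mul]

lemma one_sub_card_filter_not_div_le {Ω : Type*} [Fintype Ω] [Nonempty Ω] {p q : Ω → Prop}
    [DecidablePred p] [DecidablePred q] (hpq : ∀ ω, p ω → q ω) :
    1 - (#{ω | ¬ p ω} : ℝ) / Fintype.card Ω ≤ Nat.card {ω // q ω} / Fintype.card Ω := by
  have hΩ : (0 : ℝ) < Fintype.card Ω := by exact_mod_cast Fintype.card_pos
  have hsplit : (#{ω | p ω} : ℝ) + #{ω | ¬ p ω} = Fintype.card Ω := by
    exact_mod_cast card_filter_add_card_filter_not p
  have hpq' : (#{ω | p ω} : ℝ) ≤ #{ω | q ω} := by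
    exact_mod_cast card_le_card fun ω => by simpa using hpq ω
  rw [Nat.card_eq_fintype_card, Fintype.card_subtype, one_sub_div hΩ.ne']
  gcongr
  linarith

def HasSurplus {α β : Type*} [DecidableEq β] (k : ℕ) (C : Finset α) (O : α → Finset β) : Prop :=
  ∀ T ⊆ C, T.Nonempty → k + #T ≤ #(T.biUnion O)

instance {α β : Type*} [DecidableEq α] [DecidableEq β] (k : ℕ) (C : Finset α) (O : α → Finset β) :
    Decidable (HasSurplus k C O) :=
  decidable_of_iff (∀ T ∈ C.powerset, T.Nonempty → k + #T ≤ #(T.biUnion O)) (by simp [HasSurplus])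

section update_erase
variable {α β : Type*} [DecidableEq α] [DecidableEq β] (O : α → Finset β) (c₀ : α) (x : β)

lemma update_erase_subset (c : α) : Function.update O c₀ ((O c₀).erase x) c ⊆ O c := by
  rcases eq_or_ne c c₀ with rfl | hc
  · simp [erase_subset]
  · simp [hc]

lemma biUnion_subset_insert_biUnion_update_erase (T : Finset α) :
    T.biUnion O ⊆ insert x (T.biUnion (Function.update O c₀ ((O c₀).erase x))) := by
  intro y hy
  obtain ⟨c, hc, hyc⟩ := mem_biUnion.1 hy
  rcases eq_or_ne y x with rfl | hyx
  · exact mem_insert_self _ _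
  refine mem_insert_of_mem (mem_biUnion.2 ⟨c, hc, ?_⟩)
  rcases eq_or_ne c c₀ with rfl | hcc
  · simpa [hyx] using hyc
  · simpa [hcc] using hyc

lemma biUnion_subset_biUnion_update_erase {T : Finset α}
    (h : c₀ ∈ T → x ∈ (T.erase c₀).biUnion O) :
    T.biUnion O ⊆ T.biUnion (Function.update O c₀ ((O c₀).erase x)) := by
  intro y hy
  obtain ⟨c, hc, hyc⟩ := mem_biUnion.1 hy
  rcases eq_or_ne c c₀ with rfl | hcc
  · rcases eq_or_ne y x with rfl | hyx
    · obtain ⟨c', hc', hyc'⟩ := mem_biUnion.1 (h hc)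
      exact mem_biUnion.2 ⟨c', mem_of_mem_erase hc', by simpa [ne_of_mem_erase hc'] using hyc'⟩
    · exact mem_biUnion.2 ⟨c, hc, by simpa [hyx] using hyc⟩
  · exact mem_biUnion.2 ⟨c, hc, by simpa [hcc] using hyc⟩

end update_erase

lemma HasSurplus.le_card {α β : Type*} [DecidableEq β] {k : ℕ} {C : Finset α} {O : α → Finset β}
    (h : HasSurplus k C O) {c : α} (hc : c ∈ C) : k + 1 ≤ #(O c) := by
  simpa using h {c} (singleton_subset_iff.2 hc) (singleton_nonempty c)

namespace HasSurplus
variable {α β : Type*} [DecidableEq α] [DecidableEq β] {k : ℕ} {C : Finset α} {O : α → Finset β}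

lemma card_biUnion_inter_eq (h : HasSurplus k C O) {T₁ T₂ : Finset α} (h₁ : T₁ ⊆ C) (h₂ : T₂ ⊆ C)
    (hne : (T₁ ∩ T₂).Nonempty) (ht₁ : #(T₁.biUnion O) = k + #T₁)
    (ht₂ : #(T₂.biUnion O) = k + #T₂) :
    #((T₁ ∩ T₂).biUnion O) = k + #(T₁ ∩ T₂) := by
  -- submodularity of `T ↦ #(T.biUnion O)`
  have hunion := h (T₁ ∪ T₂) (union_subset h₁ h₂) (hne.mono (inter_subset_union))
  have hinter := h (T₁ ∩ T₂) (inter_subset_left.trans h₁) hne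
  have hsub : #((T₁ ∩ T₂).biUnion O) ≤ #(T₁.biUnion O ∩ T₂.biUnion O) :=
    card_le_card (subset_inter (biUnion_subset_biUnion_of_subset_left O inter_subset_left)
      (biUnion_subset_biUnion_of_subset_left O inter_subset_right))
  have := card_union_add_card_inter (T₁.biUnion O) (T₂.biUnion O)
  have := card_union_add_card_inter T₁ T₂
  rw [union_biUnion] at hunion
  omega

lemma exists_tight_of_not_update_erase (h : HasSurplus k C O) {c₀ : α} {x : β}
    (hx : ¬ HasSurplus k C (Function.update O c₀ ((O c₀).erase x))) :
    ∃ T ⊆ C, c₀ ∈ T ∧ #(T.biUnion O) = k + #T ∧ x ∉ (T.erase c₀).biUnion O := by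
  simp only [HasSurplus, not_forall, not_le] at hx
  obtain ⟨T, hTC, hT, hlt⟩ := hx
  have hins := card_le_card (biUnion_subset_insert_biUnion_update_erase O c₀ x T)
  have hge := h T hTC hT
  have hcard := card_insert_le x (T.biUnion (Function.update O c₀ ((O c₀).erase x)))
  have hkey : c₀ ∈ T ∧ x ∉ (T.erase c₀).biUnion O := by
    by_contra hno
    have := card_le_card (biUnion_subset_biUnion_update_erase O c₀ x fun hc => by
      by_contra hx
      exact hno ⟨hc, hx⟩)
    omega
  exact ⟨T, hTC, hkey.1, by omega, hkey.2⟩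

lemma exists_update_erase (h : HasSurplus k C O) {c₀ : α} (hbig : k + 2 ≤ #(O c₀)) :
    ∃ x ∈ O c₀, HasSurplus k C (Function.update O c₀ ((O c₀).erase x)) := by
  by_contra! hno
  choose! Tx hTxC hc₀Tx hTxtight hxTx using
    fun x hx => h.exists_tight_of_not_update_erase (hno x hx)
  obtain ⟨x₀, hx₀⟩ : (O c₀).Nonempty := card_pos.1 (by omega)
  -- a smallest tight set through `c₀`; by `card_biUnion_inter_eq` it lies in every `Tx x`
  let F := {T ∈ C.powerset | c₀ ∈ T ∧ #(T.biUnion O) = k + #T}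
  obtain ⟨T₀, hT₀F, hmin⟩ := F.exists_min_image card
    ⟨Tx x₀, by simp [F, hTxC x₀ hx₀, hc₀Tx x₀ hx₀, hTxtight x₀ hx₀]⟩
  simp only [F, mem_filter, mem_powerset] at hT₀F hmin
  obtain ⟨hT₀C, hc₀T₀, hT₀tight⟩ := hT₀F
  have hT₀sub : ∀ x ∈ O c₀, T₀ ⊆ Tx x := by
    intro x hx
    have hne : (T₀ ∩ Tx x).Nonempty := ⟨c₀, mem_inter.2 ⟨hc₀T₀, hc₀Tx x hx⟩⟩
    have hle := hmin (T₀ ∩ Tx x) ⟨inter_subset_left.trans hT₀C, mem_inter.2 ⟨hc₀T₀, hc₀Tx x hx⟩,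
      h.card_biUnion_inter_eq hT₀C (hTxC x hx) hne hT₀tight (hTxtight x hx)⟩
    rw [← eq_of_subset_of_card_le inter_subset_left hle]
    exact inter_subset_right
  have hdisj : Disjoint (O c₀) ((T₀.erase c₀).biUnion O) := disjoint_left.2 fun x hx hmem =>
    hxTx x hx (biUnion_subset_biUnion_of_subset_left O (erase_subset_erase c₀ (hT₀sub x hx)) hmem)
  have hsplit : #(T₀.biUnion O) = #(O c₀) + #((T₀.erase c₀).biUnion O) := by
    rw [← card_union_of_disjoint hdisj, ← biUnion_insert, insert_erase hc₀T₀]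
  have hcardT₀ := card_erase_add_one hc₀T₀
  rcases (T₀.erase c₀).eq_empty_or_nonempty with he | hne
  · rw [he] at hsplit hcardT₀
    simp only [biUnion_empty, card_empty] at hsplit hcardT₀
    omega
  · have := h _ ((erase_subset c₀ T₀).trans hT₀C) hne
    omega

theorem exists_subset_card_eq (h : HasSurplus k C O) :
    ∃ S : α → Finset β, (∀ c, S c ⊆ O c) ∧ (∀ c ∈ C, #(S c) = k + 1) ∧ HasSurplus k C S := by
  induction hN : ∑ c ∈ C, #(O c) using Nat.strong_induction_on generalizing O with
  | _ N ih =>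
    by_cases hbig : ∃ c₀ ∈ C, k + 2 ≤ #(O c₀)
    · obtain ⟨c₀, hc₀, hc₀big⟩ := hbig
      obtain ⟨x, hx, hx'⟩ := h.exists_update_erase hc₀big
      have hlt : ∑ c ∈ C, #(Function.update O c₀ ((O c₀).erase x) c) < N := by
        rw [← hN]
        refine sum_lt_sum (fun c _ => card_le_card (update_erase_subset O c₀ x c)) ⟨c₀, hc₀, ?_⟩
        simpa using card_erase_lt_of_mem hx
      obtain ⟨S, hSO, hScard, hS⟩ := ih _ hlt hx' rfl
      exact ⟨S, fun c => (hSO c).trans (update_erase_subset O c₀ x c), hScard, hS⟩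
    · simp only [not_exists, not_and, not_le] at hbig
      exact ⟨O, fun c => subset_rfl, fun c hc => le_antisymm (Nat.le_of_lt_succ (hbig c hc))
        (h.le_card hc), h⟩

end HasSurplus

lemma Finset.exists_card_le_mul_card_filter {β σ : Type*} [Fintype σ] [DecidableEq σ] (f : β → σ)
    {T : Finset β} (hT : T.Nonempty) : ∃ s, #T ≤ Fintype.card σ * #{c ∈ T | f c = s} := by
  have : Nonempty σ := ⟨f hT.choose⟩
  obtain ⟨s, -, hs⟩ := exists_le_of_sum_le (f := fun _ => #T)
    (g := fun s => Fintype.card σ * #{c ∈ T | f c = s}) univ_nonempty (by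
      rw [← mul_sum, ← card_eq_sum_card_fiberwise fun c _ => mem_univ (f c), sum_const, card_univ,
        smul_eq_mul])
  exact ⟨s, hs⟩

lemma Finset.exists_subset_image_eq_card_eq {α β : Type*} [DecidableEq α] [DecidableEq β]
    {f : α → β} {A : Finset α} {B : Finset β} (h : B ⊆ A.image f) :
    ∃ A' ⊆ A, A'.image f = B ∧ #A' = #B := by
  obtain ⟨A', hA', hinj, rfl⟩ := exists_subset_injOn_image_eq_of_surjOn (A : Set α) B (by
    intro y hy
    simpa using h hy)
  exact ⟨A', by exact_mod_cast hA', rfl, (card_image_of_injOn hinj).symm⟩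

theorem exists_subsets_of_forall_hasSurplus_block {σ τ α β : Type*} [Fintype σ] [DecidableEq σ]
    [Fintype τ] [DecidableEq τ] [DecidableEq α] [DecidableEq β] (k : ℕ) (proj : α → β)
    (Obs : σ × τ → Finset α) (h : ∀ s, HasSurplus k ({s} ×ˢ univ) fun c => (Obs c).image proj) :
    ∃ G : σ × τ → Finset α, (∀ c, G c ⊆ Obs c ∧ #(G c) = k + 1) ∧
      ∀ T : Finset (σ × τ), T.Nonempty →
        (#T : ℤ) ≤ Fintype.card σ * (#((T.biUnion G).image proj) - k) := by
  choose S hSO hScard hS using fun s => (h s).exists_subset_card_eq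
  choose G hGO hGS hGcard using fun c : σ × τ => exists_subset_image_eq_card_eq (hSO c.1 c)
  refine ⟨G, fun c => ⟨hGO c, (hGcard c).trans (hScard c.1 c (by simp))⟩, fun T hT => ?_⟩
  obtain ⟨s, hs⟩ := exists_card_le_mul_card_filter Prod.fst hT
  set F := {c ∈ T | c.1 = s}
  have hF : F.Nonempty := card_pos.1 (Nat.pos_of_mul_pos_left (hT.card_pos.trans_le hs))
  have hsurplus := hS s F (fun c hc => mem_product.2 ⟨mem_singleton.2 (mem_filter.1 hc).2,
    mem_univ _⟩) hF
  have hsub : F.biUnion (S s) ⊆ (T.biUnion G).image proj := by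
    intro y hy
    obtain ⟨c, hc, hy⟩ := mem_biUnion.1 hy
    rw [mem_filter] at hc
    rw [← hc.2, ← hGS c] at hy
    exact image_subset_image (subset_biUnion_of_mem G hc.1) hy
  have := card_le_card hsub
  calc (#T : ℤ) ≤ Fintype.card σ * #F := by exact_mod_cast hs
    _ ≤ Fintype.card σ * (#((T.biUnion G).image proj) - k) := by gcongr; omega

-- `ω c d` is the `d`-th draw in column `c`; block `s` consists of the columns `{s} × τ`.
def BlocksHaveSurplus {σ τ κ : Type*} [Fintype τ] {l n : ℕ} (k : ℕ) (i₀ : κ)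
    (ω : σ × τ → Fin l → κ → Fin n) : Prop :=
  ∀ s, HasSurplus k ({s} ×ˢ univ) fun c => univ.image fun d => ω c d i₀

instance {σ τ κ : Type*} [Fintype σ] [DecidableEq σ] [Fintype τ] [DecidableEq τ] {l n : ℕ} (k : ℕ)
    (i₀ : κ) : DecidablePred (BlocksHaveSurplus (σ := σ) (τ := τ) (l := l) (n := n) k i₀) :=
  fun _ => by unfold BlocksHaveSurplus; infer_instance

lemma filter_not_blocksHaveSurplus_subset {σ τ κ : Type*} [Fintype σ] [DecidableEq σ]
    [Fintype τ] [DecidableEq τ] [Fintype κ] [DecidableEq κ] (k l n : ℕ) (i₀ : κ)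
    (hτ : k + Fintype.card τ ≤ n) :
    ({ω : σ × τ → Fin l → κ → Fin n | ¬ BlocksHaveSurplus k i₀ ω} : Finset _)
      ⊆ univ.biUnion fun s => (Icc 1 (Fintype.card τ)).biUnion fun t =>
          (powersetCard t ({s} ×ˢ univ)).biUnion fun T =>
            (powersetCard (k + t - 1) univ).biUnion fun R => {ω | ∀ c ∈ T, ∀ d, ω c d i₀ ∈ R} := by
  intro ω hω
  simp only [mem_filter, mem_univ, true_and, BlocksHaveSurplus, HasSurplus, not_forall,
    not_le] at hω
  obtain ⟨s, T, hTs, hT, hlt⟩ := hω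
  have hTm : #T ≤ Fintype.card τ := by simpa using card_le_card hTs
  obtain ⟨R, hR, hRcard⟩ := exists_superset_card_eq
    (s := T.biUnion fun c => univ.image fun d => ω c d i₀) (n := k + #T - 1) (by omega)
    (by rw [Fintype.card_fin]; omega)
  simp only [mem_biUnion, mem_univ, true_and, mem_Icc, mem_powersetCard, subset_univ, mem_filter]
  exact ⟨s, #T, ⟨hT.card_pos, hTm⟩, T, ⟨hTs, rfl⟩, R, hRcard,
    fun c hc d => hR (mem_biUnion.2 ⟨c, hc, mem_image_of_mem _ (mem_univ d)⟩)⟩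

theorem card_filter_not_blocksHaveSurplus_div_le {σ τ κ : Type*} [Fintype σ] [DecidableEq σ]
    [Fintype τ] [DecidableEq τ] [Fintype κ] [DecidableEq κ] (k l n : ℕ) [NeZero n] (i₀ : κ)
    (hτ : k + Fintype.card τ ≤ n) :
    (#{ω : σ × τ → Fin l → κ → Fin n | ¬ BlocksHaveSurplus k i₀ ω} : ℝ)
        / Fintype.card (σ × τ → Fin l → κ → Fin n)
      ≤ Fintype.card σ * ∑ t ∈ Icc 1 (Fintype.card τ), (Fintype.card τ).choose t
          * n.choose (k + t - 1) * ((k + t - 1 : ℕ) / n : ℝ) ^ (l * t) := by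
  set m := Fintype.card τ
  set N := Fintype.card (σ × τ → Fin l → κ → Fin n)
  let E (T : Finset (σ × τ)) (R : Finset (Fin n)) : Finset (σ × τ → Fin l → κ → Fin n) :=
    {ω | ∀ c ∈ T, ∀ d, ω c d i₀ ∈ R}
  have hE (t : ℕ) (T : Finset (σ × τ)) (hT : #T = t) (R : Finset (Fin n)) (hR : #R = k + t - 1) :
      (#(E T R) : ℝ) / N = ((k + t - 1 : ℕ) / n : ℝ) ^ (l * t) := by
    simp only [E, N]
    rw [card_filter_forall_mem_coord_div_card, hT, hR]
  calc _ ≤ (#(univ.biUnion fun s => (Icc 1 m).biUnion fun t =>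
          (powersetCard t ({s} ×ˢ univ)).biUnion fun T =>
            (powersetCard (k + t - 1) univ).biUnion fun R => E T R) : ℝ) / N := by
        gcongr
        exact filter_not_blocksHaveSurplus_subset k l n i₀ hτ
    _ ≤ (∑ s, ∑ t ∈ Icc 1 m, ∑ T ∈ powersetCard t ({s} ×ˢ univ),
          ∑ R ∈ powersetCard (k + t - 1) univ, (#(E T R) : ℝ)) / N := by
        gcongr
        exact_mod_cast card_biUnion_le.trans (sum_le_sum fun s _ => card_biUnion_le.trans
          (sum_le_sum fun t _ => card_biUnion_le.trans (sum_le_sum fun T _ => card_biUnion_le)))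
    _ = _ := by
        simp only [sum_div]
        rw [← nsmul_eq_mul, ← card_univ (α := σ), ← sum_const]
        refine sum_congr rfl fun s _ => sum_congr rfl fun t _ => ?_
        rw [sum_congr rfl fun T hT => sum_congr rfl fun R hR =>
          hE t T (mem_powersetCard.1 hT).2 R (mem_powersetCard.1 hR).2]
        simp only [sum_const, card_powersetCard, card_product, card_singleton, one_mul,
          card_univ, Fintype.card_fin, nsmul_eq_mul]
        ring

theorem stmt11 (j i : ℕ) (hj1 : 1 ≤ j) (hij : i ≤ j)
    (n ri' r' r l : ℕ) (hn0 : 0 < n) (hr0 : 0 < r)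
    (ε : ℝ) (hε0 : 0 < ε) (hε1 : ε < 1)
    (hri'n : (ri' : ℝ) ≤ (n : ℝ) / 6)
    (hlb : (l : ℝ) >
      max (27 * Real.log (n / ε) + 9 * Real.log (2 * r / ε) + 18) (6 * ri')) :
    1 - ε * r' / r ≤
      (Nat.card {ω : (Fin r' × Fin (n - ri')) → Fin l → (Fin j → Fin n) //
          ∃ G : (Fin r' × Fin (n - ri')) → Finset (Fin j → Fin n),
            (∀ c, G c ⊆ Finset.univ.image (ω c) ∧ (G c).card = ri' + 1) ∧
            ∀ T : Finset (Fin r' × Fin (n - ri')), T.Nonempty →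
              (T.card : ℤ) ≤ (r' : ℤ) *
                ((((T.biUnion G).image (fun v => v ⟨i - 1, by omega⟩)).card : ℤ) -
                  (ri' : ℤ))} : ℝ) /
        (Fintype.card ((Fin r' × Fin (n - ri')) → Fin l → (Fin j → Fin n)) : ℝ) := by
  have : NeZero n := ⟨hn0.ne'⟩
  have hkn : 6 * ri' ≤ n := by exact_mod_cast (by linarith : (6 * ri' : ℝ) ≤ n)
  have hkl : 6 * ri' < l := by exact_mod_cast (le_max_right _ _).trans_lt hlb
  have hl := ((le_max_left _ _).trans_lt hlb).le
  set i₀ : Fin j := ⟨i - 1, by omega⟩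
  have hbad := card_filter_not_blocksHaveSurplus_div_le (σ := Fin r') (τ := Fin (n - ri')) ri' l
    n i₀ (by rw [Fintype.card_fin]; omega)
  rw [Fintype.card_fin, Fintype.card_fin] at hbad
  refine le_trans (sub_le_sub_left (hbad.trans ?_) 1)
    (one_sub_card_filter_not_div_le fun ω hω => ?_)
  · calc (r' : ℝ) * _ ≤ r' * (ε / r) := by
          gcongr; exact sum_choose_sub_mul_choose_mul_div_pow_le_div hε0 hε1 hr0 hkn hkl hl
      _ = ε * r' / r := by ring
  · obtain ⟨G, hG, hT⟩ := exists_subsets_of_forall_hasSurplus_block ri' (· i₀)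
      (fun c => univ.image (ω c)) fun s => by simpa only [image_image, Function.comp_def] using hω s
    exact ⟨G, hG, by simpa only [Fintype.card_fin] using hT⟩
end

section
/- Let n, ℓ, m be positive integers with 1 ≤ ℓ ≤ n and m ≥ 3ℓ, and let Y_1,…,Y_m be independent random variables, each uniformly distributed on {1,…,n}. Then the probability that the set {Y_1,…,Y_m} has at most ℓ distinct elements is at most C(n,ℓ)·(ℓ/n)^m, which in turn is at most (e^{1/2}·ℓ/n)^{2ℓ}, where C(n,ℓ) is the binomial coefficient. -/
/-!
A map `Fin m → Fin n` with at most `ℓ` values lands in some `ℓ`-subset `S`, and for a fixed `S`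
there are `ℓ^m` such maps; a union bound over the `C(n,ℓ)` subsets gives the first inequality.
For the second, `C(n,ℓ) ≤ (e n/ℓ)^ℓ` and `(ℓ/n)^m ≤ (ℓ/n)^{3ℓ}` combine to `(e (ℓ/n)^2)^ℓ`.
-/

open Finset

theorem Nat.choose_le_exp_mul_div_pow (n k : ℕ) :
    (n.choose k : ℝ) ≤ (Real.exp 1 * n / k) ^ k := by
  rcases k.eq_zero_or_pos with rfl | hk
  · simp
  have hk' : (0 : ℝ) < k := by exact_mod_cast hk
  have hfact : (k : ℝ) ^ k / Real.exp k ≤ k.factorial := by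
    rw [div_le_iff₀ (Real.exp_pos _), mul_comm, ← div_le_iff₀ (by positivity)]
    exact Real.pow_div_factorial_le_exp _ hk'.le k
  calc (n.choose k : ℝ) ≤ (n : ℝ) ^ k / k.factorial := Nat.choose_le_pow_div k n
    _ ≤ (n : ℝ) ^ k / ((k : ℝ) ^ k / Real.exp k) :=
      div_le_div_of_nonneg_left (by positivity) (by positivity) hfact
    _ = (Real.exp 1 * n / k) ^ k := by
      rw [div_pow, mul_pow, ← Real.exp_nat_mul, mul_one]
      field_simp

theorem card_fun_with_small_image_le {α β : Type*} [Fintype α] [Fintype β] [DecidableEq β]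
    {k : ℕ} (hk : k ≤ Fintype.card β) :
    Nat.card {f : α → β // (univ.image f).card ≤ k} ≤
      (Fintype.card β).choose k * k ^ Fintype.card α := by
  classical
  have hcover : ({f : α → β | (univ.image f).card ≤ k} : Finset (α → β)) ⊆
      (powersetCard k univ).biUnion fun S => Fintype.piFinset fun _ : α => S := by
    intro f hf
    obtain ⟨S, hfS, hS⟩ := exists_superset_card_eq (mem_filter.1 hf).2 (by simpa using hk)
    simp only [mem_biUnion, mem_powersetCard, Fintype.mem_piFinset]
    exact ⟨S, ⟨subset_univ S, hS⟩, fun a => hfS (mem_image_of_mem f (mem_univ a))⟩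
  rw [Nat.card_eq_fintype_card, Fintype.card_subtype, ← Finset.card_univ (α := β),
    ← card_powersetCard]
  refine (card_le_card hcover).trans (card_biUnion_le_card_mul _ _ _ fun S hS => ?_)
  simp [Fintype.card_piFinset, (mem_powersetCard.1 hS).2]

theorem choose_mul_div_pow_le_exp_half_mul_div_pow {n k m : ℕ} (hkn : k ≤ n) (hm : 3 * k ≤ m) :
    (n.choose k : ℝ) * ((k : ℝ) / n) ^ m ≤ (Real.exp (1 / 2) * k / n) ^ (2 * k) := by
  rcases k.eq_zero_or_pos with rfl | hk
  · simpa using pow_le_one₀ le_rfl zero_le_one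
  have hk' : (0 : ℝ) < k := by exact_mod_cast hk
  have hn' : (0 : ℝ) < n := by exact_mod_cast hk.trans_le hkn
  have hratio : (k : ℝ) / n ≤ 1 := (div_le_one hn').2 (by exact_mod_cast hkn)
  calc (n.choose k : ℝ) * ((k : ℝ) / n) ^ m
      ≤ (n.choose k : ℝ) * ((k : ℝ) / n) ^ (3 * k) := by
        gcongr _ * ?_
        exact pow_le_pow_of_le_one (by positivity) hratio hm
    _ ≤ (Real.exp 1 * n / k) ^ k * ((k : ℝ) / n) ^ (3 * k) := by
        gcongr
        exact Nat.choose_le_exp_mul_div_pow n k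
    _ = (Real.exp (1 / 2) * k / n) ^ (2 * k) := by
        rw [pow_mul, pow_mul, ← mul_pow]
        congr 1
        rw [show Real.exp 1 = Real.exp (1 / 2) ^ 2 by rw [← Real.exp_nat_mul]; norm_num]
        field_simp

theorem stmt17_general (n ℓ m : ℕ) (hℓn : ℓ ≤ n) (hm : 3 * ℓ ≤ m) :
    (Nat.card {ω : Fin m → Fin n //
        ((Finset.univ : Finset (Fin m)).image ω).card ≤ ℓ} : ℝ) /
        (Fintype.card (Fin m → Fin n) : ℝ)
      ≤ (n.choose ℓ : ℝ) * ((ℓ : ℝ) / n) ^ m ∧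
    (n.choose ℓ : ℝ) * ((ℓ : ℝ) / n) ^ m ≤ (Real.exp (1 / 2) * ℓ / n) ^ (2 * ℓ) := by
  refine ⟨?_, choose_mul_div_pow_le_exp_half_mul_div_pow hℓn hm⟩
  have hcount : Nat.card {ω : Fin m → Fin n // (univ.image ω).card ≤ ℓ} ≤
      n.choose ℓ * ℓ ^ m := by
    simpa using card_fun_with_small_image_le (α := Fin m) (β := Fin n) (k := ℓ) (by simpa)
  rw [Fintype.card_fun, Fintype.card_fin, Fintype.card_fin, Nat.cast_pow, div_pow, ← mul_div_assoc]
  gcongr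
  exact_mod_cast hcount

/-- The union-bound estimate from the proof of Lemma 9: for `m ≥ 3ℓ` i.i.d. draws,
each uniform on `{1,…,n}` (modelled by the uniform counting probability on the space
`Fin m → Fin n` of outcomes), the probability that at most `ℓ` distinct values occur is
at most `C(n,ℓ)·(ℓ/n)^m`, which is at most `(e^{1/2}·ℓ/n)^{2ℓ}`. -/
theorem stmt17 (n ℓ m : ℕ) (hn : 0 < n) (hℓ1 : 1 ≤ ℓ) (hℓn : ℓ ≤ n)
    (hm0 : 0 < m) (hm : 3 * ℓ ≤ m) :
    (Nat.card {ω : Fin m → Fin n //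
        ((Finset.univ : Finset (Fin m)).image ω).card ≤ ℓ} : ℝ) /
        (Fintype.card (Fin m → Fin n) : ℝ)
      ≤ (n.choose ℓ : ℝ) * ((ℓ : ℝ) / n) ^ m ∧
    (n.choose ℓ : ℝ) * ((ℓ : ℝ) / n) ^ m ≤ (Real.exp (1 / 2) * ℓ / n) ^ (2 * ℓ) :=
  stmt17_general n ℓ m hℓn hm
end
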